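/- arXiv:2211.08277 — 4 statements merged into one kernel-verified Lean document; each statement's English description precedes it below -/
import Mathlib

section
/- The nonnegative orthant is forward invariant for the SEIR system: if S, E, I, R is a solution of the SEIR system on [0,T] with S(0) ≥ 0, E(0) ≥ 0, I(0) ≥ 0, R(0) ≥ 0, then S(t) ≥ 0, E(t) ≥ 0, I(t) ≥ 0, and R(t) ≥ 0 for all t in [0,T]. -/
open Filter Set Real intervalIntegral
open scoped Topology

/-- Right Dini behaviour of the positive part of a differentiable function. -/
lemma dini_posPart {g : ℝ → ℝ} {x d : ℝ} (hg : HasDerivAt g d x) :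
    Tendsto (fun z => (z - x)⁻¹ * (max 0 (g z) - max 0 (g x))) (𝓝[>] x)
      (𝓝 (if 0 < g x then d else if g x < 0 then 0 else max 0 d)) := by
  have hslope : Tendsto (slope g x) (𝓝[>] x) (𝓝 d) :=
    (hasDerivAt_iff_tendsto_slope.1 hg).mono_left
      (nhdsWithin_mono x fun z hz => ne_of_gt hz)
  rcases lt_trichotomy 0 (g x) with h | h | h
  · rw [if_pos h]
    have hev : ∀ᶠ z in 𝓝[>] x, 0 < g z :=
      (hg.continuousAt.eventually_mem (Ioi_mem_nhds h)).filter_mono nhdsWithin_le_nhds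
    refine hslope.congr' ?_
    filter_upwards [hev, self_mem_nhdsWithin] with z hz hz'
    rw [slope_def_field]
    rw [max_eq_right hz.le, max_eq_right h.le]
    field_simp
  · rw [if_neg (by linarith), if_neg (by linarith)]
    have hmax : Tendsto (fun z => max 0 (slope g x z)) (𝓝[>] x) (𝓝 (max 0 d)) :=
      tendsto_const_nhds.max hslope
    refine hmax.congr' ?_
    filter_upwards [self_mem_nhdsWithin] with z (hz : x < z)
    have hzx : (0:ℝ) ≤ (z - x)⁻¹ := by
      have hpos : 0 < z - x := sub_pos.2 hz
      positivity
    rw [slope_def_field, ← h]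
    simp only [sub_zero, max_self]
    rw [mul_max_of_nonneg _ _ hzx, mul_zero, div_eq_inv_mul]
  · rw [if_neg (by linarith), if_pos h]
    have hev : ∀ᶠ z in 𝓝[>] x, g z < 0 :=
      (hg.continuousAt.eventually_mem (Iio_mem_nhds h)).filter_mono nhdsWithin_le_nhds
    refine tendsto_const_nhds.congr' ?_
    filter_upwards [hev] with z hz
    rw [max_eq_left hz.le, max_eq_left h.le]
    ring

/-- Forward invariance of the nonnegative orthant for the SEIR system. -/
theorem seir_nonneg_orthant_invariant
    (β σ γ P T : ℝ) (hβ : 0 < β) (hσ : 0 < σ) (hγ : 0 < γ) (hP : 0 < P) (hT : 0 ≤ T)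
    (S E I R : ℝ → ℝ)
    (hS : ∀ t ∈ Set.Icc (0:ℝ) T, HasDerivAt S (-(β * S t * I t) / P) t)
    (hE : ∀ t ∈ Set.Icc (0:ℝ) T, HasDerivAt E (β * S t * I t / P - σ * E t) t)
    (hI : ∀ t ∈ Set.Icc (0:ℝ) T, HasDerivAt I (σ * E t - γ * I t) t)
    (hR : ∀ t ∈ Set.Icc (0:ℝ) T, HasDerivAt R (γ * I t) t)
    (hS0 : 0 ≤ S 0) (hE0 : 0 ≤ E 0) (hI0 : 0 ≤ I 0) (hR0 : 0 ≤ R 0) :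
    ∀ t ∈ Set.Icc (0:ℝ) T, 0 ≤ S t ∧ 0 ≤ E t ∧ 0 ≤ I t ∧ 0 ≤ R t := by
  have hmemIcc : ∀ t : ℝ, max 0 (min t T) ∈ Set.Icc (0:ℝ) T := fun t =>
    ⟨le_max_left _ _, max_le hT (min_le_right _ _)⟩
  have hproj : ∀ t ∈ Set.Icc (0:ℝ) T, max 0 (min t T) = t := fun t ht => by
    rw [min_eq_left ht.2, max_eq_right ht.1]
  -- continuity on the interval
  have hSc : ContinuousOn S (Set.Icc 0 T) := fun t ht =>
    (hS t ht).continuousAt.continuousWithinAt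
  have hEc : ContinuousOn E (Set.Icc 0 T) := fun t ht =>
    (hE t ht).continuousAt.continuousWithinAt
  have hIc : ContinuousOn I (Set.Icc 0 T) := fun t ht =>
    (hI t ht).continuousAt.continuousWithinAt
  have hRc : ContinuousOn R (Set.Icc 0 T) := fun t ht =>
    (hR t ht).continuousAt.continuousWithinAt
  -- a globally continuous extension of I
  set Ip : ℝ → ℝ := fun s => I (max 0 (min s T)) with hIp
  have hprojc : Continuous fun s : ℝ => max 0 (min s T) :=
    continuous_const.max (continuous_id.min continuous_const)
  have hIpc : Continuous Ip := continuous_iff_continuousAt.2 fun s =>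
    ContinuousAt.comp (f := fun s : ℝ => max 0 (min s T))
      ((hI _ (hmemIcc s)).continuousAt) hprojc.continuousAt
  -- Step 1 : nonnegativity of S via an integrating factor
  set A : ℝ → ℝ := fun t => ∫ s in (0:ℝ)..t, β * Ip s / P with hA
  have hAc : Continuous fun s => β * Ip s / P := (continuous_const.mul hIpc).div_const P
  have hAd : ∀ t : ℝ, HasDerivAt A (β * Ip t / P) t := fun t =>
    intervalIntegral.integral_hasDerivAt_right (hAc.intervalIntegrable 0 t)
      (hAc.stronglyMeasurableAtFilter _ _) hAc.continuousAt
  have hSnn : ∀ t ∈ Set.Icc (0:ℝ) T, 0 ≤ S t := by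
    have hg : ∀ x ∈ Set.Ico (0:ℝ) T,
        HasDerivWithinAt (fun t => S t * Real.exp (A t)) 0 (Set.Ici x) x := by
      intro x hx
      have hx' : x ∈ Set.Icc (0:ℝ) T := ⟨hx.1, hx.2.le⟩
      have hIpx : Ip x = I x := by rw [hIp]; simp only; rw [hproj x hx']
      have hd := (hS x hx').mul ((hAd x).exp)
      have : -(β * S x * I x) / P * Real.exp (A x) +
          S x * (Real.exp (A x) * (β * Ip x / P)) = 0 := by
        rw [hIpx]; field_simp; ring
      rw [this] at hd
      exact hd.hasDerivWithinAt
    have hgc : ContinuousOn (fun t => S t * Real.exp (A t)) (Set.Icc 0 T) :=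
      hSc.mul ((Real.continuous_exp.comp
        (continuous_iff_continuousAt.2 fun t => (hAd t).continuousAt)).continuousOn)
    have hconst := constant_of_has_deriv_right_zero hgc hg
    intro t ht
    have h1 := hconst t ht
    have hA0 : A 0 = 0 := intervalIntegral.integral_same
    rw [hA0, Real.exp_zero, mul_one] at h1
    have : 0 ≤ S t * Real.exp (A t) := h1 ▸ hS0
    exact (mul_nonneg_iff_of_pos_right (Real.exp_pos _)).1 this
  -- Step 2 : a bound on S
  obtain ⟨z, hz, hzM⟩ := isCompact_Icc.exists_isMaxOn (Set.nonempty_Icc.2 hT) hSc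
  set M : ℝ := S z with hM
  have hSM : ∀ x ∈ Set.Icc (0:ℝ) T, S x ≤ M := fun x hx => hzM hx
  have hM0 : 0 ≤ M := le_trans (hSnn z hz) le_rfl
  -- Step 3 : Gronwall for the negative parts of E and I
  set f : ℝ → ℝ := fun t => max 0 (-E t) + max 0 (-I t) with hf
  set LE : ℝ → ℝ := fun x =>
    if 0 < -E x then -(β * S x * I x / P - σ * E x)
    else if -E x < 0 then 0 else max 0 (-(β * S x * I x / P - σ * E x)) with hLE
  set LI : ℝ → ℝ := fun x =>
    if 0 < -I x then -(σ * E x - γ * I x)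
    else if -I x < 0 then 0 else max 0 (-(σ * E x - γ * I x)) with hLI
  set K : ℝ := β * M / P + σ + γ with hK
  clear_value M
  have hfc : ContinuousOn f (Set.Icc 0 T) :=
    (continuousOn_const.sup hEc.neg).add (continuousOn_const.sup hIc.neg)
  have hgron : ∀ x ∈ Set.Icc (0:ℝ) T, f x ≤ gronwallBound 0 K 0 (x - 0) := by
    apply le_gronwallBound_of_liminf_deriv_right_le (f' := fun x => LE x + LI x) hfc
    · intro x hx r hr
      have hx' : x ∈ Set.Icc (0:ℝ) T := ⟨hx.1, hx.2.le⟩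
      have h1 := dini_posPart ((hE x hx').neg)
      have h2 := dini_posPart ((hI x hx').neg)
      have hq : Tendsto (fun z => (z - x)⁻¹ * (f z - f x)) (𝓝[>] x)
          (𝓝 (LE x + LI x)) := by
        have := h1.add h2
        refine Tendsto.congr (fun z => by rw [hf]; simp only [Pi.neg_apply]; ring) this
      exact ((hq.eventually (gt_mem_nhds hr)).frequently)
    · simp [hf, max_eq_left (neg_nonpos.2 hE0), max_eq_left (neg_nonpos.2 hI0)]
    · intro x hx
      have hx' : x ∈ Set.Icc (0:ℝ) T := ⟨hx.1, hx.2.le⟩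
      have hSx := hSnn x hx'
      have hSMx := hSM x hx'
      have h0E : (0:ℝ) ≤ max 0 (-E x) := le_max_left _ _
      have h0I : (0:ℝ) ≤ max 0 (-I x) := le_max_left _ _
      have hmE : -E x ≤ max 0 (-E x) := le_max_right _ _
      have hmI : -I x ≤ max 0 (-I x) := le_max_right _ _
      have hchain : β * S x * (-I x) / P ≤ β * M / P * max 0 (-I x) := by
        have h1 : S x * (-I x) ≤ S x * max 0 (-I x) :=
          mul_le_mul_of_nonneg_left hmI hSx
        have h2 : S x * max 0 (-I x) ≤ M * max 0 (-I x) :=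
          mul_le_mul_of_nonneg_right hSMx h0I
        calc β * S x * (-I x) / P = (β / P) * (S x * (-I x)) := by ring
          _ ≤ (β / P) * (M * max 0 (-I x)) :=
            mul_le_mul_of_nonneg_left (h1.trans h2) (by positivity)
          _ = β * M / P * max 0 (-I x) := by ring
      have hEbnd : LE x ≤ β * M / P * max 0 (-I x) := by
        rw [hLE]
        simp only
        split_ifs with h1 h2
        · have hEx : E x < 0 := by linarith
          have hσE : σ * E x ≤ 0 := mul_nonpos_of_nonneg_of_nonpos hσ.le hEx.le
          have : -(β * S x * I x / P - σ * E x) =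
              β * S x * (-I x) / P + σ * E x := by ring
          rw [this]; linarith
        · positivity
        · have hEx : E x = 0 := by linarith
          apply max_le
          · positivity
          · have : -(β * S x * I x / P - σ * E x) = β * S x * (-I x) / P := by
              rw [hEx]; ring
            rw [this]; exact hchain
      have hIbnd : LI x ≤ σ * max 0 (-E x) := by
        rw [hLI]
        simp only
        split_ifs with h1 h2
        · have hIx : I x < 0 := by linarith
          have hγI : γ * I x ≤ 0 := mul_nonpos_of_nonneg_of_nonpos hγ.le hIx.le
          have hσE : σ * (-E x) ≤ σ * max 0 (-E x) :=
            mul_le_mul_of_nonneg_left hmE hσ.le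
          nlinarith
        · positivity
        · have hIx : I x = 0 := by linarith
          apply max_le
          · positivity
          · have he : -(σ * E x - γ * I x) = σ * (-E x) := by rw [hIx]; ring
            rw [he]
            exact mul_le_mul_of_nonneg_left hmE hσ.le
      have hKf : β * M / P * max 0 (-I x) + σ * max 0 (-E x) ≤ K * f x + 0 := by
        rw [hK, hf]
        have hc1 : (0:ℝ) ≤ β * M / P := by positivity
        nlinarith [mul_nonneg hc1 h0E, mul_nonneg hσ.le h0I,
          mul_nonneg hγ.le h0E, mul_nonneg hγ.le h0I]
      exact le_trans (add_le_add hEbnd hIbnd) hKf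
  -- extract nonnegativity of E and I
  have hEInn : ∀ t ∈ Set.Icc (0:ℝ) T, 0 ≤ E t ∧ 0 ≤ I t := by
    intro t ht
    have h1 := hgron t ht
    rw [gronwallBound_ε0_δ0] at h1
    have h0E : (0:ℝ) ≤ max 0 (-E t) := le_max_left _ _
    have h0I : (0:ℝ) ≤ max 0 (-I t) := le_max_left _ _
    have hmE : -E t ≤ max 0 (-E t) := le_max_right _ _
    have hmI : -I t ≤ max 0 (-I t) := le_max_right _ _
    have hft : f t = max 0 (-E t) + max 0 (-I t) := by rw [hf]
    constructor <;> [linarith [hft ▸ h1]; linarith [hft ▸ h1]]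
  -- Step 4 : R is monotone
  have hRmono : MonotoneOn R (Set.Icc 0 T) := by
    apply monotoneOn_of_deriv_nonneg (convex_Icc 0 T) hRc
    · intro x hx
      rw [interior_Icc] at hx
      exact ((hR x ⟨hx.1.le, hx.2.le⟩).differentiableAt).differentiableWithinAt
    · intro x hx
      rw [interior_Icc] at hx
      have hx' : x ∈ Set.Icc (0:ℝ) T := ⟨hx.1.le, hx.2.le⟩
      rw [(hR x hx').deriv]
      exact mul_nonneg hγ.le (hEInn x hx').2
  intro t ht
  refine ⟨hSnn t ht, (hEInn t ht).1, (hEInn t ht).2, ?_⟩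
  exact le_trans hR0 (hRmono (Set.left_mem_Icc.2 hT) ht ht.1)
end

section
/- If S, E, I, R is a solution of the SEIR system on [0,T] with nonnegative initial data S(0), E(0), I(0), R(0) ≥ 0, then each of S(t), E(t), I(t), R(t) satisfies 0 ≤ S(t), E(t), I(t), R(t) ≤ S(0)+E(0)+I(0)+R(0) for all t in [0,T]. -/
open Set Real

/-- If `f' s + c * f s ≥ -L * ε * exp (K s)` on `[0,t₁]`, `L < K + c`, `f 0 + ε > 0`,
then `f t₁ + ε exp (K t₁) > 0`. -/
lemma seir_aux_pos (f d : ℝ → ℝ) (c K L ε t₁ : ℝ)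
    (hε : 0 < ε) (ht : 0 < t₁)
    (hf : ∀ s ∈ Set.Icc (0:ℝ) t₁, HasDerivAt f (d s) s)
    (hlow : ∀ s ∈ Set.Icc (0:ℝ) t₁, -(L * (ε * Real.exp (K*s))) ≤ d s + c * f s)
    (hK : L < K + c)
    (h0 : 0 < f 0 + ε) :
    0 < f t₁ + ε * Real.exp (K * t₁) := by
  set u : ℝ → ℝ := fun s => (f s + ε * Real.exp (K*s)) * Real.exp (c*s) with hu
  have hder : ∀ s ∈ Set.Icc (0:ℝ) t₁, HasDerivAt u
      ((d s + c * f s + ε * (K + c) * Real.exp (K*s)) * Real.exp (c*s)) s := by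
    intro s hs
    have h1 : HasDerivAt (fun s => Real.exp (K*s)) (Real.exp (K*s) * K) s := by
      simpa using ((hasDerivAt_id s).const_mul K).exp
    have h2 : HasDerivAt (fun s => Real.exp (c*s)) (Real.exp (c*s) * c) s := by
      simpa using ((hasDerivAt_id s).const_mul c).exp
    have : HasDerivAt (fun y => (f y + ε * Real.exp (K*y)) * Real.exp (c*y))
        ((d s + ε * (Real.exp (K*s) * K)) * Real.exp (c*s)
          + (f s + ε * Real.exp (K*s)) * (Real.exp (c*s) * c)) s :=
      (((hf s hs).add (h1.const_mul ε)).mul h2)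
    convert this using 1
    ring
  have hcont : ContinuousOn u (Set.Icc 0 t₁) := fun s hs =>
    ((hder s hs).continuousAt).continuousWithinAt
  have hmono : StrictMonoOn u (Set.Icc 0 t₁) := by
    apply strictMonoOn_of_deriv_pos (convex_Icc 0 t₁) hcont
    intro x hx
    rw [interior_Icc] at hx
    have hx' : x ∈ Set.Icc (0:ℝ) t₁ := Ioo_subset_Icc_self hx
    rw [(hder x hx').deriv]
    have h1 := hlow x hx'
    have h2 : (0:ℝ) < Real.exp (K*x) := Real.exp_pos _
    have h3 : (0:ℝ) < Real.exp (c*x) := Real.exp_pos _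
    have hKL : 0 < K + c - L := by linarith
    have h4 : 0 < ε * (K + c - L) * Real.exp (K*x) := by positivity
    nlinarith
  have h01 : u 0 < u t₁ := hmono (Set.left_mem_Icc.2 ht.le) (Set.right_mem_Icc.2 ht.le) ht
  have hu0 : u 0 = f 0 + ε := by simp [hu]
  have h5 : (0:ℝ) < Real.exp (c*t₁) := Real.exp_pos _
  have hu0' : 0 < u t₁ := by rw [← hu0] at h0; linarith
  have : 0 < (f t₁ + ε * Real.exp (K*t₁)) * Real.exp (c*t₁) := hu0'
  nlinarith


set_option maxHeartbeats 1000000 in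
/-- For a solution of the SEIR system on `[0,T]` with nonnegative initial data, each
compartment stays between `0` and the initial total population. -/
theorem seir_compartments_bounded
    (β σ γ P T : ℝ) (hβ : 0 < β) (hσ : 0 < σ) (hγ : 0 < γ) (hP : 0 < P) (hT : 0 ≤ T)
    (S E I R : ℝ → ℝ)
    (hS : ∀ t ∈ Set.Icc (0:ℝ) T, HasDerivAt S (-(β * S t * I t) / P) t)
    (hE : ∀ t ∈ Set.Icc (0:ℝ) T, HasDerivAt E (β * S t * I t / P - σ * E t) t)
    (hI : ∀ t ∈ Set.Icc (0:ℝ) T, HasDerivAt I (σ * E t - γ * I t) t)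
    (hR : ∀ t ∈ Set.Icc (0:ℝ) T, HasDerivAt R (γ * I t) t)
    (hS0 : 0 ≤ S 0) (hE0 : 0 ≤ E 0) (hI0 : 0 ≤ I 0) (hR0 : 0 ≤ R 0) :
    ∀ t ∈ Set.Icc (0:ℝ) T,
      (0 ≤ S t ∧ S t ≤ S 0 + E 0 + I 0 + R 0) ∧
      (0 ≤ E t ∧ E t ≤ S 0 + E 0 + I 0 + R 0) ∧
      (0 ≤ I t ∧ I t ≤ S 0 + E 0 + I 0 + R 0) ∧
      (0 ≤ R t ∧ R t ≤ S 0 + E 0 + I 0 + R 0) := by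
  have contS : ContinuousOn S (Set.Icc 0 T) := fun s hs =>
    ((hS s hs).continuousAt).continuousWithinAt
  have contE : ContinuousOn E (Set.Icc 0 T) := fun s hs =>
    ((hE s hs).continuousAt).continuousWithinAt
  have contI : ContinuousOn I (Set.Icc 0 T) := fun s hs =>
    ((hI s hs).continuousAt).continuousWithinAt
  have contR : ContinuousOn R (Set.Icc 0 T) := fun s hs =>
    ((hR s hs).continuousAt).continuousWithinAt
  obtain ⟨MS, hMS⟩ := isCompact_Icc.exists_bound_of_continuousOn contS
  obtain ⟨MI, hMI⟩ := isCompact_Icc.exists_bound_of_continuousOn contI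
  set M := max MS MI with hMdef
  have h0T : (0:ℝ) ∈ Set.Icc 0 T := ⟨le_refl 0, hT⟩
  have hM0 : 0 ≤ M := le_trans (norm_nonneg (S 0)) ((hMS 0 h0T).trans (le_max_left _ _))
  have hSb : ∀ s ∈ Set.Icc (0:ℝ) T, |S s| ≤ M := fun s hs =>
    (hMS s hs).trans (le_max_left _ _)
  have hIb : ∀ s ∈ Set.Icc (0:ℝ) T, |I s| ≤ M := fun s hs =>
    (hMI s hs).trans (le_max_right _ _)
  have hBMP : 0 ≤ β * M / P := div_nonneg (mul_nonneg hβ.le hM0) hP.le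
  set K := β * M / P + σ + γ + 1 with hKdef
  -- key positivity estimate
  have key : ∀ ε > (0:ℝ), ∀ t ∈ Set.Icc (0:ℝ) T,
      0 < S t + ε * Real.exp (K * t) ∧ 0 < E t + ε * Real.exp (K * t) ∧
      0 < I t + ε * Real.exp (K * t) := by
    intro ε hε
    by_contra hcon
    push_neg at hcon
    obtain ⟨t₀, ht₀, hfail⟩ := hcon
    set B := {s : ℝ | s ∈ Set.Icc (0:ℝ) T ∧ (S s + ε * Real.exp (K * s) ≤ 0 ∨
      E s + ε * Real.exp (K * s) ≤ 0 ∨ I s + ε * Real.exp (K * s) ≤ 0)} with hBdef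
    have hne : B.Nonempty := by
      refine ⟨t₀, ht₀, ?_⟩
      by_cases h1 : 0 < S t₀ + ε * Real.exp (K * t₀)
      · by_cases h2 : 0 < E t₀ + ε * Real.exp (K * t₀)
        · exact Or.inr (Or.inr (hfail h1 h2))
        · exact Or.inr (Or.inl (le_of_not_gt h2))
      · exact Or.inl (le_of_not_gt h1)
    have hgcont : Continuous (fun s : ℝ => ε * Real.exp (K * s)) := by fun_prop
    have hBclosed : IsClosed B := by
      have hc1 : IsClosed (Set.Icc (0:ℝ) T ∩
          (fun s => S s + ε * Real.exp (K * s)) ⁻¹' Set.Iic 0) :=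
        (contS.add hgcont.continuousOn).preimage_isClosed_of_isClosed isClosed_Icc isClosed_Iic
      have hc2 : IsClosed (Set.Icc (0:ℝ) T ∩
          (fun s => E s + ε * Real.exp (K * s)) ⁻¹' Set.Iic 0) :=
        (contE.add hgcont.continuousOn).preimage_isClosed_of_isClosed isClosed_Icc isClosed_Iic
      have hc3 : IsClosed (Set.Icc (0:ℝ) T ∩
          (fun s => I s + ε * Real.exp (K * s)) ⁻¹' Set.Iic 0) :=
        (contI.add hgcont.continuousOn).preimage_isClosed_of_isClosed isClosed_Icc isClosed_Iic
      have hBeq : B = (Set.Icc (0:ℝ) T ∩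
          (fun s => S s + ε * Real.exp (K * s)) ⁻¹' Set.Iic 0) ∪
          (Set.Icc (0:ℝ) T ∩ (fun s => E s + ε * Real.exp (K * s)) ⁻¹' Set.Iic 0) ∪
          (Set.Icc (0:ℝ) T ∩ (fun s => I s + ε * Real.exp (K * s)) ⁻¹' Set.Iic 0) := by
        ext s
        simp only [hBdef, Set.mem_setOf_eq, Set.mem_union, Set.mem_inter_iff,
          Set.mem_preimage, Set.mem_Iic]
        tauto
      rw [hBeq]
      exact (hc1.union hc2).union hc3
    have hbdd : BddBelow B := ⟨0, fun s hs => hs.1.1⟩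
    set t₁ := sInf B with ht₁def
    have ht₁B : t₁ ∈ B := hBclosed.csInf_mem hne hbdd
    have ht₁Icc : t₁ ∈ Set.Icc (0:ℝ) T := ht₁B.1
    have ht₁pos : 0 < t₁ := by
      rcases ht₁Icc.1.lt_or_eq with h' | h'
      · exact h'
      · exfalso
        have hε1 : 0 < ε * Real.exp (K * t₁) := by positivity
        rcases ht₁B.2 with h | h | h
        · have h0 : 0 ≤ S t₁ := by rw [← h']; exact hS0
          linarith
        · have h0 : 0 ≤ E t₁ := by rw [← h']; exact hE0
          linarith
        · have h0 : 0 ≤ I t₁ := by rw [← h']; exact hI0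
          linarith
    have hsub : Set.Icc (0:ℝ) t₁ ⊆ Set.Icc (0:ℝ) T := Set.Icc_subset_Icc le_rfl ht₁Icc.2
    -- strict positivity before t₁
    have hIco : ∀ s ∈ Set.Ico (0:ℝ) t₁,
        0 < S s + ε * Real.exp (K * s) ∧ 0 < E s + ε * Real.exp (K * s) ∧
        0 < I s + ε * Real.exp (K * s) := by
      intro s hs
      have hsnot : s ∉ B := fun hmem => absurd (csInf_le hbdd hmem) (not_le.2 hs.2)
      have hd : ¬(S s + ε * Real.exp (K * s) ≤ 0 ∨ E s + ε * Real.exp (K * s) ≤ 0 ∨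
          I s + ε * Real.exp (K * s) ≤ 0) :=
        fun hd => hsnot ⟨hsub ⟨hs.1, hs.2.le⟩, hd⟩
      push_neg at hd
      exact ⟨hd.1, hd.2.1, hd.2.2⟩
    -- nonnegativity up to and including t₁
    have hlim : ∀ (f : ℝ → ℝ), ContinuousOn f (Set.Icc 0 T) →
        (∀ x ∈ Set.Ico (0:ℝ) t₁, 0 ≤ f x + ε * Real.exp (K * x)) →
        0 ≤ f t₁ + ε * Real.exp (K * t₁) := by
      intro f hfc hfpos
      have hnb : (nhdsWithin t₁ (Set.Ioo 0 t₁)).NeBot := by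
        rw [← mem_closure_iff_nhdsWithin_neBot, closure_Ioo (ne_of_lt ht₁pos)]
        exact Set.right_mem_Icc.2 ht₁pos.le
      have hcw : ContinuousWithinAt (fun x => f x + ε * Real.exp (K * x))
          (Set.Ioo 0 t₁) t₁ := by
        have : ContinuousWithinAt (fun x => f x + ε * Real.exp (K * x))
            (Set.Icc 0 T) t₁ := (hfc t₁ ht₁Icc).add hgcont.continuousWithinAt
        exact this.mono (Set.Ioo_subset_Icc_self.trans hsub)
      exact ge_of_tendsto hcw (Filter.eventually_of_mem self_mem_nhdsWithin
        (fun x hx => hfpos x ⟨hx.1.le, hx.2⟩))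
    have hbd : ∀ s ∈ Set.Icc (0:ℝ) t₁,
        0 ≤ S s + ε * Real.exp (K * s) ∧ 0 ≤ E s + ε * Real.exp (K * s) ∧
        0 ≤ I s + ε * Real.exp (K * s) := by
      intro s hs
      rcases hs.2.lt_or_eq with h' | h'
      · have := hIco s ⟨hs.1, h'⟩
        exact ⟨this.1.le, this.2.1.le, this.2.2.le⟩
      · subst h'
        exact ⟨hlim S contS (fun x hx => (hIco x hx).1.le),
          hlim E contE (fun x hx => (hIco x hx).2.1.le),
          hlim I contI (fun x hx => (hIco x hx).2.2.le)⟩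
    -- now derive a contradiction from membership of t₁ in B
    rcases ht₁B.2 with h | h | h
    · -- S fails
      have := seir_aux_pos S (fun s => -(β * S s * I s) / P) (β * M / P) K
        (2 * (β * M / P)) ε t₁ hε ht₁pos
        (fun s hs => hS s (hsub hs))
        (fun s hs => by
          show -(2 * (β * M / P) * (ε * Real.exp (K * s))) ≤
            -(β * S s * I s) / P + β * M / P * S s
          have h1 := (hbd s hs).1
          have h3 := abs_le.mp (hIb s (hsub hs))
          have ha : 0 < ε * Real.exp (K * s) := by positivity
          have hxi : -(ε * Real.exp (K * s)) * (2 * M) ≤ S s * (M - I s) := by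
            nlinarith [mul_nonneg (by linarith : 0 ≤ S s + ε * Real.exp (K * s))
              (by linarith : (0:ℝ) ≤ M - I s),
              mul_le_mul_of_nonneg_left (by linarith : M - I s ≤ 2 * M) ha.le]
          have hrw : -(β * S s * I s) / P + β * M / P * S s = β / P * (S s * (M - I s)) := by
            field_simp
            all_goals first | (left; ring1) | ring1
          have hrw2 : -(2 * (β * M / P) * (ε * Real.exp (K * s)))
              = β / P * (-(ε * Real.exp (K * s)) * (2 * M)) := by
            field_simp
            all_goals first | (left; ring1) | ring1
          rw [hrw, hrw2]
          exact mul_le_mul_of_nonneg_left hxi (div_nonneg hβ.le hP.le))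
        (by rw [hKdef]; linarith)
        (by linarith)
      linarith
    · -- E fails
      have := seir_aux_pos E (fun s => β * S s * I s / P - σ * E s) σ K
        (β * M / P) ε t₁ hε ht₁pos
        (fun s hs => hE s (hsub hs))
        (fun s hs => by
          show -(β * M / P * (ε * Real.exp (K * s))) ≤
            β * S s * I s / P - σ * E s + σ * E s
          have h1 := (hbd s hs).1
          have h2 := (hbd s hs).2.2
          have h3 := abs_le.mp (hIb s (hsub hs))
          have h4 := abs_le.mp (hSb s (hsub hs))
          have ha : 0 < ε * Real.exp (K * s) := by positivity
          have hxi : -(ε * Real.exp (K * s)) * M ≤ S s * I s := by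
            rcases le_or_gt 0 (S s) with hc | hc
            · nlinarith [mul_le_mul_of_nonneg_left
                (by linarith : -(ε * Real.exp (K * s)) ≤ I s) hc,
                mul_le_mul_of_nonneg_right (h4.2) ha.le]
            · nlinarith [mul_le_mul_of_nonpos_left (h3.2) hc.le,
                mul_le_mul_of_nonneg_right
                  (by linarith : -(ε * Real.exp (K * s)) ≤ S s) hM0]
          have hrw : β * S s * I s / P - σ * E s + σ * E s = β / P * (S s * I s) := by
            field_simp
            all_goals first | (left; ring1) | ring1
          have hrw2 : -(β * M / P * (ε * Real.exp (K * s)))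
              = β / P * (-(ε * Real.exp (K * s)) * M) := by
            field_simp
            all_goals first | (left; ring1) | ring1
          rw [hrw, hrw2]
          exact mul_le_mul_of_nonneg_left hxi (div_nonneg hβ.le hP.le))
        (by rw [hKdef]; linarith)
        (by linarith)
      linarith
    · -- I fails
      have := seir_aux_pos I (fun s => σ * E s - γ * I s) γ K σ ε t₁ hε ht₁pos
        (fun s hs => hI s (hsub hs))
        (fun s hs => by
          show -(σ * (ε * Real.exp (K * s))) ≤ σ * E s - γ * I s + γ * I s
          have h2 := (hbd s hs).2.1
          have ha : 0 < ε * Real.exp (K * s) := by positivity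
          have : -(ε * Real.exp (K * s)) ≤ E s := by linarith
          nlinarith [mul_le_mul_of_nonneg_left this hσ.le])
        (by rw [hKdef]; linarith)
        (by linarith)
      linarith
  -- nonnegativity of S, E, I
  have hpos3 : ∀ t ∈ Set.Icc (0:ℝ) T, 0 ≤ S t ∧ 0 ≤ E t ∧ 0 ≤ I t := by
    intro t ht
    have h1 : ∀ x : ℝ, (∀ ε > (0:ℝ), 0 < x + ε * Real.exp (K * t)) → 0 ≤ x := by
      intro x hx
      by_contra hneg
      push_neg at hneg
      have he : 0 < Real.exp (K * t) := Real.exp_pos _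
      have hε : 0 < -x / (2 * Real.exp (K * t)) :=
        div_pos (neg_pos.2 hneg) (by positivity)
      have h2 := hx _ hε
      have h3 : -x / (2 * Real.exp (K * t)) * Real.exp (K * t) = -x / 2 := by
        field_simp
      rw [h3] at h2
      linarith
    exact ⟨h1 (S t) (fun ε hε => (key ε hε t ht).1),
      h1 (E t) (fun ε hε => (key ε hε t ht).2.1),
      h1 (I t) (fun ε hε => (key ε hε t ht).2.2)⟩
  -- R is monotone
  have hRmono : MonotoneOn R (Set.Icc 0 T) := by
    apply monotoneOn_of_deriv_nonneg (convex_Icc 0 T) contR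
    · intro x hx
      rw [interior_Icc] at hx
      exact ((hR x (Set.Ioo_subset_Icc_self hx)).differentiableAt).differentiableWithinAt
    · intro x hx
      rw [interior_Icc] at hx
      have hx' := Set.Ioo_subset_Icc_self hx
      rw [(hR x hx').deriv]
      exact mul_nonneg hγ.le (hpos3 x hx').2.2
  -- total population conserved
  have hNconst : ∀ t ∈ Set.Icc (0:ℝ) T, S t + E t + I t + R t = S 0 + E 0 + I 0 + R 0 := by
    have hc : ContinuousOn (fun t => S t + E t + I t + R t) (Set.Icc 0 T) :=
      ((contS.add contE).add contI).add contR
    have hd : ∀ x ∈ Set.Ico (0:ℝ) T,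
        HasDerivWithinAt (fun t => S t + E t + I t + R t) 0 (Set.Ici x) x := by
      intro x hx
      have hx' : x ∈ Set.Icc (0:ℝ) T := Set.Ico_subset_Icc_self hx
      have hdd := (((hS x hx').add (hE x hx')).add (hI x hx')).add (hR x hx')
      have heq : -(β * S x * I x) / P + (β * S x * I x / P - σ * E x) + (σ * E x - γ * I x)
          + γ * I x = 0 := by ring
      rw [heq] at hdd
      exact hdd.hasDerivWithinAt
    exact constant_of_has_deriv_right_zero hc hd
  intro t ht
  obtain ⟨hSt, hEt, hIt⟩ := hpos3 t ht
  have hRt : 0 ≤ R t := hR0.trans (hRmono h0T ht ht.1)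
  have hN := hNconst t ht
  exact ⟨⟨hSt, by linarith⟩, ⟨hEt, by linarith⟩, ⟨hIt, by linarith⟩, ⟨hRt, by linarith⟩⟩
end

section
/- The nonnegative orthant is forward invariant for the SμEIR system: if S, E, I, R is a solution of the SμEIR system on [0,T] with S(0) ≥ 0, E(0) ≥ 0, I(0) ≥ 0, R(0) ≥ 0, then S(t) ≥ 0, E(t) ≥ 0, I(t) ≥ 0, and R(t) ≥ 0 for all t in [0,T]. -/
lemma hasDerivAt_minsq (x : ℝ) :
    HasDerivAt (fun y : ℝ => (min y 0) ^ 2) (2 * min x 0) x := by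
  rcases lt_trichotomy x 0 with h | h | h
  · have heq : (fun y : ℝ => (min y 0) ^ 2) =ᶠ[nhds x] fun y => y ^ 2 := by
      filter_upwards [eventually_lt_nhds h] with y hy
      rw [min_eq_left hy.le]
    have h2 : HasDerivAt (fun y : ℝ => y ^ 2) (2 * x) x := by
      simpa using (hasDerivAt_pow 2 x)
    rw [min_eq_left h.le]
    exact h2.congr_of_eventuallyEq heq
  · subst h
    rw [min_self, mul_zero]
    rw [hasDerivAt_iff_tendsto_slope]
    have hb : ∀ y : ℝ, ‖slope (fun y : ℝ => (min y 0) ^ 2) 0 y‖ ≤ |y| := by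
      intro y
      rcases eq_or_ne y 0 with rfl | hy
      · simp [slope]
      · have hs : slope (fun y : ℝ => (min y 0) ^ 2) 0 y = (min y 0) ^ 2 / y := by
          simp [slope, hy, div_eq_inv_mul]
        rw [Real.norm_eq_abs, hs, abs_div, abs_pow]
        have h1 : |min y 0| ≤ |y| := by
          rcases le_total y 0 with hy' | hy' <;> simp [min_eq_left, min_eq_right, hy', abs_nonneg]
        rw [div_le_iff₀ (abs_pos.mpr hy)]
        nlinarith [abs_nonneg y, abs_nonneg (min y 0)]
    have : Filter.Tendsto (fun y : ℝ => |y|) (nhdsWithin 0 {0}ᶜ) (nhds 0) := by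
      have h0 : Filter.Tendsto (fun y : ℝ => |y|) (nhds 0) (nhds 0) := by
        simpa using continuous_abs.tendsto (0:ℝ)
      exact h0.mono_left nhdsWithin_le_nhds
    exact squeeze_zero_norm hb this
  · have heq : (fun y : ℝ => (min y 0) ^ 2) =ᶠ[nhds x] fun _ => 0 := by
      filter_upwards [eventually_gt_nhds h] with y hy
      rw [min_eq_right hy.le]; ring
    rw [min_eq_right h.le, mul_zero]
    exact (hasDerivAt_const x (0:ℝ)).congr_of_eventuallyEq heq


lemma mul_nonneg_of_nonpos_nonpos' {a b : ℝ} (ha : a ≤ 0) (hb : b ≤ 0) : 0 ≤ a * b := by nlinarith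

lemma min_mul_self_eq (x : ℝ) : min x 0 * x = (min x 0) ^ 2 := by
  rcases le_total x 0 with h | h
  · rw [min_eq_left h]; ring
  · rw [min_eq_right h]; ring

set_option maxHeartbeats 1000000 in
lemma sueir_key (β σ γ μ P M s e i : ℝ) (hβ : 0 < β) (hσ : 0 < σ) (hγ : 0 < γ)
    (hμ0 : 0 < μ) (hμ1 : μ ≤ 1) (hP : 0 < P)
    (hs : |s| ≤ M) (he : |e| ≤ M) (hi : |i| ≤ M) :
    2 * min s 0 * (-(β * (i + e) * s) / P)
      + 2 * min e 0 * (β * (i + e) * s / P - σ * e)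
      + 2 * min i 0 * (μ * σ * e - γ * i)
    ≤ (10 * β * M / P + 2 * σ) *
        ((min s 0) ^ 2 + (min e 0) ^ 2 + (min i 0) ^ 2) := by
  set ms := min s 0 with hms
  set me := min e 0 with hme
  set mi := min i 0 with hmi
  set ps := max s 0 with hps
  set pe := max e 0 with hpe
  set pi := max i 0 with hpi
  have hsplit_s : ms + ps = s := by rw [hms, hps]; rw [(min_add_max s 0).trans (add_zero s)]
  have hsplit_e : me + pe = e := by rw [hme, hpe]; rw [(min_add_max e 0).trans (add_zero e)]
  have hsplit_i : mi + pi = i := by rw [hmi, hpi]; rw [(min_add_max i 0).trans (add_zero i)]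
  have hms0 : ms ≤ 0 := min_le_right _ _
  have hme0 : me ≤ 0 := min_le_right _ _
  have hmi0 : mi ≤ 0 := min_le_right _ _
  have hps0 : 0 ≤ ps := le_max_right _ _
  have hpe0 : 0 ≤ pe := le_max_right _ _
  have hpi0 : 0 ≤ pi := le_max_right _ _
  have hsM : -M ≤ s ∧ s ≤ M := abs_le.mp hs
  have heM : -M ≤ e ∧ e ≤ M := abs_le.mp he
  have hiM : -M ≤ i ∧ i ≤ M := abs_le.mp hi
  have hM0 : 0 ≤ M := le_trans (abs_nonneg s) hs
  have hpsM : ps ≤ M := max_le hsM.2 hM0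
  have hmsM : -M ≤ ms := le_min hsM.1 (neg_nonpos.mpr hM0)
  have hmeM : -M ≤ me := le_min heM.1 (neg_nonpos.mpr hM0)
  have hmiM : -M ≤ mi := le_min hiM.1 (neg_nonpos.mpr hM0)
  have hmss : ms * s = ms ^ 2 := min_mul_self_eq s
  have hmee : me * e = me ^ 2 := min_mul_self_eq e
  have hmii : mi * i = mi ^ 2 := min_mul_self_eq i
  -- β-part
  have hbpart : -2 * (i + e) * ms ^ 2 + 2 * (i + e) * s * me
      ≤ 10 * M * (ms ^ 2 + me ^ 2 + mi ^ 2) := by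
    have h1 : -2 * (i + e) * ms ^ 2 ≤ 4 * M * ms ^ 2 := by
      nlinarith [sq_nonneg ms]
    have h2 : (i + e) * ms * me ≤ M * (ms ^ 2 + me ^ 2) := by
      have hmm : 0 ≤ ms * me := mul_nonneg_of_nonpos_nonpos' hms0 hme0
      have ha : (i + e) * (ms * me) ≤ (2 * M) * (ms * me) :=
        mul_le_mul_of_nonneg_right (by linarith [hiM.2, heM.2]) hmm
      have hb : ms * me ≤ (ms ^ 2 + me ^ 2) / 2 := by nlinarith [sq_nonneg (ms - me)]
      have hc : (2 * M) * (ms * me) ≤ (2 * M) * ((ms ^ 2 + me ^ 2) / 2) :=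
        mul_le_mul_of_nonneg_left hb (by linarith)
      calc (i + e) * ms * me = (i + e) * (ms * me) := by ring
        _ ≤ (2 * M) * (ms * me) := ha
        _ ≤ (2 * M) * ((ms ^ 2 + me ^ 2) / 2) := hc
        _ = M * (ms ^ 2 + me ^ 2) := by ring
    have h3 : ps * mi * me ≤ M * (mi ^ 2 + me ^ 2) / 2 := by
      have hmm : 0 ≤ mi * me := mul_nonneg_of_nonpos_nonpos' hmi0 hme0
      have ha : ps * (mi * me) ≤ M * (mi * me) := mul_le_mul_of_nonneg_right hpsM hmm
      have hb : mi * me ≤ (mi ^ 2 + me ^ 2) / 2 := by nlinarith [sq_nonneg (mi - me)]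
      have hc : M * (mi * me) ≤ M * ((mi ^ 2 + me ^ 2) / 2) :=
        mul_le_mul_of_nonneg_left hb hM0
      calc ps * mi * me = ps * (mi * me) := by ring
        _ ≤ M * (mi * me) := ha
        _ ≤ M * ((mi ^ 2 + me ^ 2) / 2) := hc
        _ = M * (mi ^ 2 + me ^ 2) / 2 := by ring
    have h4 : ps * me ^ 2 ≤ M * me ^ 2 := by nlinarith [sq_nonneg me]
    have h5 : ps * (pi + pe) * me ≤ 0 := by
      have := mul_nonneg hps0 (add_nonneg hpi0 hpe0)
      exact mul_nonpos_of_nonneg_of_nonpos this hme0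
    have hdecomp : (i + e) * s * me
        = (i + e) * ms * me + ps * mi * me + ps * me ^ 2 + ps * (pi + pe) * me := by
      rw [← hsplit_s, ← hsplit_e, ← hsplit_i]; ring
    have hq1 : 0 ≤ M * ms ^ 2 := mul_nonneg hM0 (sq_nonneg ms)
    have hq2 : 0 ≤ M * me ^ 2 := mul_nonneg hM0 (sq_nonneg me)
    have hq3 : 0 ≤ M * mi ^ 2 := mul_nonneg hM0 (sq_nonneg mi)
    linarith [hdecomp, h1, h2, h3, h4, h5]
  -- non-β part
  have hrest : 2 * me * (-(σ * e)) + 2 * mi * (μ * σ * e - γ * i)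
      ≤ 2 * σ * (ms ^ 2 + me ^ 2 + mi ^ 2) := by
    have h1 : 2 * me * (-(σ * e)) = -2 * σ * me ^ 2 := by
      rw [← hmee]; ring
    have h2 : e * mi ≤ (me ^ 2 + mi ^ 2) / 2 := by
      have hd : e * mi = me * mi + pe * mi := by rw [← hsplit_e]; ring
      have h3 : pe * mi ≤ 0 := mul_nonpos_of_nonneg_of_nonpos hpe0 hmi0
      nlinarith [sq_nonneg (me - mi)]
    have hμσ : 0 < μ * σ := mul_pos hμ0 hσ
    have h4 : 2 * mi * (μ * σ * e) ≤ σ * (me ^ 2 + mi ^ 2) := by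
      have := mul_le_mul_of_nonneg_left h2 (le_of_lt (by positivity : (0:ℝ) < 2 * (μ * σ)))
      calc 2 * mi * (μ * σ * e) = 2 * (μ * σ) * (e * mi) := by ring
        _ ≤ 2 * (μ * σ) * ((me ^ 2 + mi ^ 2) / 2) := this
        _ = μ * σ * (me ^ 2 + mi ^ 2) := by ring
        _ ≤ 1 * σ * (me ^ 2 + mi ^ 2) := by
            apply mul_le_mul_of_nonneg_right _ (by positivity)
            nlinarith
        _ = σ * (me ^ 2 + mi ^ 2) := by ring
    have h5 : 2 * mi * (-(γ * i)) = -2 * γ * mi ^ 2 := by rw [← hmii]; ring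
    nlinarith [sq_nonneg ms, sq_nonneg me, sq_nonneg mi]
  -- combine
  have hLHS : 2 * ms * (-(β * (i + e) * s) / P) + 2 * me * (β * (i + e) * s / P - σ * e)
      + 2 * mi * (μ * σ * e - γ * i)
      = β * (-2 * (i + e) * (ms * s) + 2 * (i + e) * s * me) / P
        + (2 * me * (-(σ * e)) + 2 * mi * (μ * σ * e - γ * i)) := by
    field_simp
    ring
  rw [hLHS, hmss]
  have hb1 : β * (-2 * (i + e) * ms ^ 2 + 2 * (i + e) * s * me) / P
      ≤ 10 * β * M / P * (ms ^ 2 + me ^ 2 + mi ^ 2) := by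
    rw [div_mul_eq_mul_div]
    apply div_le_div_of_nonneg_right ?_ hP.le
    linarith [mul_le_mul_of_nonneg_left hbpart hβ.le]
  calc β * (-2 * (i + e) * ms ^ 2 + 2 * (i + e) * s * me) / P
        + (2 * me * (-(σ * e)) + 2 * mi * (μ * σ * e - γ * i))
      ≤ 10 * β * M / P * (ms ^ 2 + me ^ 2 + mi ^ 2)
        + 2 * σ * (ms ^ 2 + me ^ 2 + mi ^ 2) := add_le_add hb1 hrest
    _ = (10 * β * M / P + 2 * σ) * (ms ^ 2 + me ^ 2 + mi ^ 2) := by ring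


set_option maxHeartbeats 1000000 in
/-- Forward invariance of the nonnegative orthant for the SμEIR system. -/
theorem sueir_nonneg_orthant_invariant
    (β σ γ μ P T : ℝ) (hβ : 0 < β) (hσ : 0 < σ) (hγ : 0 < γ)
    (hμ0 : 0 < μ) (hμ1 : μ ≤ 1) (hP : 0 < P) (hT : 0 ≤ T)
    (S E I R : ℝ → ℝ)
    (hS : ∀ t ∈ Set.Icc (0:ℝ) T, HasDerivAt S (-(β * (I t + E t) * S t) / P) t)
    (hE : ∀ t ∈ Set.Icc (0:ℝ) T, HasDerivAt E (β * (I t + E t) * S t / P - σ * E t) t)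
    (hI : ∀ t ∈ Set.Icc (0:ℝ) T, HasDerivAt I (μ * σ * E t - γ * I t) t)
    (hR : ∀ t ∈ Set.Icc (0:ℝ) T, HasDerivAt R (γ * I t) t)
    (hS0 : 0 ≤ S 0) (hE0 : 0 ≤ E 0) (hI0 : 0 ≤ I 0) (hR0 : 0 ≤ R 0) :
    ∀ t ∈ Set.Icc (0:ℝ) T, 0 ≤ S t ∧ 0 ≤ E t ∧ 0 ≤ I t ∧ 0 ≤ R t := by
  have h0mem : (0:ℝ) ∈ Set.Icc (0:ℝ) T := ⟨le_refl 0, hT⟩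
  -- continuity
  have hScont : ContinuousOn S (Set.Icc 0 T) := fun t ht =>
    (hS t ht).continuousAt.continuousWithinAt
  have hEcont : ContinuousOn E (Set.Icc 0 T) := fun t ht =>
    (hE t ht).continuousAt.continuousWithinAt
  have hIcont : ContinuousOn I (Set.Icc 0 T) := fun t ht =>
    (hI t ht).continuousAt.continuousWithinAt
  have hRcont : ContinuousOn R (Set.Icc 0 T) := fun t ht =>
    (hR t ht).continuousAt.continuousWithinAt
  -- bound M
  obtain ⟨C1, hC1⟩ := (isCompact_Icc).exists_bound_of_continuousOn hScont
  obtain ⟨C2, hC2⟩ := (isCompact_Icc).exists_bound_of_continuousOn hEcont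
  obtain ⟨C3, hC3⟩ := (isCompact_Icc).exists_bound_of_continuousOn hIcont
  set M : ℝ := max (max C1 C2) C3 with hM
  have hSM : ∀ t ∈ Set.Icc (0:ℝ) T, |S t| ≤ M := fun t ht =>
    (hC1 t ht).trans ((le_max_left C1 C2).trans (le_max_left _ _))
  have hEM : ∀ t ∈ Set.Icc (0:ℝ) T, |E t| ≤ M := fun t ht =>
    (hC2 t ht).trans ((le_max_right C1 C2).trans (le_max_left _ _))
  have hIM : ∀ t ∈ Set.Icc (0:ℝ) T, |I t| ≤ M := fun t ht =>
    (hC3 t ht).trans (le_max_right _ _)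
  set K : ℝ := 10 * β * M / P + 2 * σ with hK
  set F : ℝ → ℝ := fun t =>
    (min (S t) 0) ^ 2 + (min (E t) 0) ^ 2 + (min (I t) 0) ^ 2 with hF
  set F' : ℝ → ℝ := fun t =>
    2 * min (S t) 0 * (-(β * (I t + E t) * S t) / P)
      + 2 * min (E t) 0 * (β * (I t + E t) * S t / P - σ * E t)
      + 2 * min (I t) 0 * (μ * σ * E t - γ * I t) with hF'
  have hFderiv : ∀ t ∈ Set.Icc (0:ℝ) T, HasDerivAt F (F' t) t := by
    intro t ht
    have h1 : HasDerivAt (fun u => (min (S u) 0) ^ 2)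
        (2 * min (S t) 0 * (-(β * (I t + E t) * S t) / P)) t :=
      (hasDerivAt_minsq (S t)).comp t (hS t ht)
    have h2 : HasDerivAt (fun u => (min (E u) 0) ^ 2)
        (2 * min (E t) 0 * (β * (I t + E t) * S t / P - σ * E t)) t :=
      (hasDerivAt_minsq (E t)).comp t (hE t ht)
    have h3 : HasDerivAt (fun u => (min (I u) 0) ^ 2)
        (2 * min (I t) 0 * (μ * σ * E t - γ * I t)) t :=
      (hasDerivAt_minsq (I t)).comp t (hI t ht)
    exact (h1.add h2).add h3
  have hkey : ∀ t ∈ Set.Icc (0:ℝ) T, F' t ≤ K * F t := fun t ht =>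
    sueir_key β σ γ μ P M (S t) (E t) (I t) hβ hσ hγ hμ0 hμ1 hP
      (hSM t ht) (hEM t ht) (hIM t ht)
  set G : ℝ → ℝ := fun t => F t * Real.exp (-K * t) with hG
  have hGderiv : ∀ t ∈ Set.Icc (0:ℝ) T,
      HasDerivAt G (F' t * Real.exp (-K * t) + F t * (Real.exp (-K * t) * -K)) t := by
    intro t ht
    have hexp : HasDerivAt (fun u : ℝ => Real.exp (-K * u)) (Real.exp (-K * t) * -K) t := by
      have : HasDerivAt (fun u : ℝ => -K * u) (-K) t := by
        simpa using (hasDerivAt_id t).const_mul (-K)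
      exact this.exp
    exact (hFderiv t ht).mul hexp
  have hFcont : ContinuousOn F (Set.Icc 0 T) := by
    apply ContinuousOn.add
    apply ContinuousOn.add
    · exact ((continuous_id.min continuous_const).pow 2).comp_continuousOn hScont
    · exact ((continuous_id.min continuous_const).pow 2).comp_continuousOn hEcont
    · exact ((continuous_id.min continuous_const).pow 2).comp_continuousOn hIcont
  have hGcont : ContinuousOn G (Set.Icc 0 T) :=
    hFcont.mul (Real.continuous_exp.comp (continuous_const.mul continuous_id)).continuousOn
  have hanti : AntitoneOn G (Set.Icc 0 T) := by
    apply antitoneOn_of_deriv_nonpos (convex_Icc 0 T) hGcont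
    · intro x hx
      rw [interior_Icc] at hx
      exact (hGderiv x (Set.mem_Icc_of_Ioo hx)).differentiableAt.differentiableWithinAt
    · intro x hx
      rw [interior_Icc] at hx
      have hx' : x ∈ Set.Icc (0:ℝ) T := Set.mem_Icc_of_Ioo hx
      rw [(hGderiv x hx').deriv]
      have hk := hkey x hx'
      have hep := Real.exp_pos (-K * x)
      nlinarith [mul_nonneg (sub_nonneg.mpr hk) hep.le]
  have hF0 : F 0 = 0 := by
    simp only [hF, min_eq_right hS0, min_eq_right hE0, min_eq_right hI0]
    ring
  have hFle : ∀ t ∈ Set.Icc (0:ℝ) T, F t ≤ 0 := by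
    intro t ht
    have hGle : G t ≤ G 0 := hanti h0mem ht ht.1
    have hG0 : G 0 = 0 := by simp [hG, hF0]
    rw [hG0] at hGle
    have hep := Real.exp_pos (-K * t)
    have hGle' : F t * Real.exp (-K * t) ≤ 0 * Real.exp (-K * t) := by
      rw [zero_mul]
      exact hGle
    exact (mul_le_mul_iff_of_pos_right hep).mp hGle'
  -- conclude for S, E, I
  have hSEI : ∀ t ∈ Set.Icc (0:ℝ) T, 0 ≤ S t ∧ 0 ≤ E t ∧ 0 ≤ I t := by
    intro t ht
    have hle := hFle t ht
    have q1 := sq_nonneg (min (S t) 0)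
    have q2 := sq_nonneg (min (E t) 0)
    have q3 := sq_nonneg (min (I t) 0)
    have e1 : (min (S t) 0) ^ 2 = 0 := by simp only [hF] at hle; linarith
    have e2 : (min (E t) 0) ^ 2 = 0 := by simp only [hF] at hle; linarith
    have e3 : (min (I t) 0) ^ 2 = 0 := by simp only [hF] at hle; linarith
    have m1 : min (S t) 0 = 0 := by
      have := sq_eq_zero_iff.mp e1; exact this
    have m2 : min (E t) 0 = 0 := sq_eq_zero_iff.mp e2
    have m3 : min (I t) 0 = 0 := sq_eq_zero_iff.mp e3
    exact ⟨m1 ▸ min_le_left (S t) 0, m2 ▸ min_le_left (E t) 0, m3 ▸ min_le_left (I t) 0⟩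
  -- R is monotone
  have hRmono : MonotoneOn R (Set.Icc 0 T) := by
    apply monotoneOn_of_deriv_nonneg (convex_Icc 0 T) hRcont
    · intro x hx
      rw [interior_Icc] at hx
      exact (hR x (Set.mem_Icc_of_Ioo hx)).differentiableAt.differentiableWithinAt
    · intro x hx
      rw [interior_Icc] at hx
      have hx' : x ∈ Set.Icc (0:ℝ) T := Set.mem_Icc_of_Ioo hx
      rw [(hR x hx').deriv]
      exact mul_nonneg hγ.le (hSEI x hx').2.2
  intro t ht
  obtain ⟨h1, h2, h3⟩ := hSEI t ht
  refine ⟨h1, h2, h3, ?_⟩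
  calc (0:ℝ) ≤ R 0 := hR0
    _ ≤ R t := hRmono h0mem ht ht.1
end

section
/- If S, E, I, R is a solution of the SEIR system on [0,T] with nonnegative initial data S(0), E(0), I(0), R(0) ≥ 0 and S(0)+E(0)+I(0)+R(0) ≤ P, and S(0) > 0, then S(t) ≥ S(0)·exp(−βt) > 0 for all t in [0,T]; in particular the susceptible population never vanishes in finite time. -/
open Set Filter

/-- If `h` is positive just to the left of `t0`, vanishes at `t0 > 0`, and has a
derivative `d` at `t0`, then `d ≤ 0`. -/
lemma seir_aux_left_deriv_nonpos {h : ℝ → ℝ} {t0 d : ℝ} (ht0 : 0 < t0)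
    (hd : HasDerivAt h d t0)
    (hpos : ∀ t, max 0 (t0 - 1) < t → t < t0 → 0 < h t)
    (hz : h t0 = 0) : d ≤ 0 := by
  have hdw : HasDerivWithinAt h d (Iio t0) t0 := hd.hasDerivWithinAt
  rw [hasDerivWithinAt_iff_tendsto_slope] at hdw
  have hsub : Iio t0 \ {t0} = Iio t0 := by
    ext x
    simp only [mem_diff, mem_Iio, mem_singleton_iff]
    exact ⟨fun hx => hx.1, fun hx => ⟨hx, ne_of_lt hx⟩⟩
  rw [hsub] at hdw
  have hmem : Ioo (max 0 (t0 - 1)) t0 ∈ nhdsWithin t0 (Iio t0) :=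
    Ioo_mem_nhdsLT_of_mem ⟨max_lt ht0 (by linarith), le_refl t0⟩
  refine le_of_tendsto hdw ?_
  filter_upwards [hmem] with t ht
  rw [slope_def_field, hz, sub_zero]
  exact le_of_lt (div_neg_of_pos_of_neg (hpos t ht.1 ht.2) (by linarith [ht.2]))

set_option maxHeartbeats 1000000 in
/-- For a solution of the SEIR system on `[0,T]` with nonnegative initial data whose
total is at most `P`, and with `S(0) > 0`, the susceptible population satisfies
`S(t) ≥ S(0)·exp(−βt) > 0` on `[0,T]`. -/
theorem seir_susceptible_exponential_lower_bound
    (β σ γ P T : ℝ) (hβ : 0 < β) (hσ : 0 < σ) (hγ : 0 < γ) (hP : 0 < P) (hT : 0 ≤ T)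
    (S E I R : ℝ → ℝ)
    (hS : ∀ t ∈ Set.Icc (0:ℝ) T, HasDerivAt S (-(β * S t * I t) / P) t)
    (hE : ∀ t ∈ Set.Icc (0:ℝ) T, HasDerivAt E (β * S t * I t / P - σ * E t) t)
    (hI : ∀ t ∈ Set.Icc (0:ℝ) T, HasDerivAt I (σ * E t - γ * I t) t)
    (hR : ∀ t ∈ Set.Icc (0:ℝ) T, HasDerivAt R (γ * I t) t)
    (hS0 : 0 ≤ S 0) (hE0 : 0 ≤ E 0) (hI0 : 0 ≤ I 0) (hR0 : 0 ≤ R 0)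
    (hsum : S 0 + E 0 + I 0 + R 0 ≤ P) (hS0pos : 0 < S 0) :
    ∀ t ∈ Set.Icc (0:ℝ) T,
      0 < S 0 * Real.exp (-(β * t)) ∧ S 0 * Real.exp (-(β * t)) ≤ S t := by
  -- continuity
  have hScont : ContinuousOn S (Icc 0 T) := fun t ht =>
    (hS t ht).continuousAt.continuousWithinAt
  have hEcont : ContinuousOn E (Icc 0 T) := fun t ht =>
    (hE t ht).continuousAt.continuousWithinAt
  have hIcont : ContinuousOn I (Icc 0 T) := fun t ht =>
    (hI t ht).continuousAt.continuousWithinAt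
  have hRcont : ContinuousOn R (Icc 0 T) := fun t ht =>
    (hR t ht).continuousAt.continuousWithinAt
  have h0mem : (0:ℝ) ∈ Icc (0:ℝ) T := ⟨le_refl 0, hT⟩
  have hPne : P ≠ 0 := ne_of_gt hP
  -- bound M
  obtain ⟨MS, hMS⟩ := isCompact_Icc.exists_bound_of_continuousOn hScont
  obtain ⟨MI, hMI⟩ := isCompact_Icc.exists_bound_of_continuousOn hIcont
  set M : ℝ := max MS MI with hMdef
  have hM0 : 0 ≤ M := le_trans (norm_nonneg (S 0)) (le_trans (hMS 0 h0mem) (le_max_left _ _))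
  have hMS' : ∀ t ∈ Icc (0:ℝ) T, |S t| ≤ M := fun t ht =>
    le_trans (hMS t ht) (le_max_left _ _)
  have hMI' : ∀ t ∈ Icc (0:ℝ) T, |I t| ≤ M := fun t ht =>
    le_trans (hMI t ht) (le_max_right _ _)
  set L : ℝ := σ + γ + β * M / P + 1 with hLdef
  have hbMP : 0 ≤ β * M / P := by positivity
  have hLσ : σ ≤ L := by simp only [hLdef]; linarith
  have hLP : L * P = σ * P + γ * P + β * M + P := by
    simp only [hLdef]; field_simp
  -- key barrier claim
  have key : ∀ ε > (0:ℝ), ∀ t ∈ Icc (0:ℝ) T,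
      -(ε * Real.exp (L * t)) < S t ∧ -(ε * Real.exp (L * t)) < E t ∧
      -(ε * Real.exp (L * t)) < I t := by
    intro ε hε
    by_contra hcon
    push_neg at hcon
    obtain ⟨t1, ht1, ht1'⟩ := hcon
    set g : ℝ → ℝ := fun t => min (min (S t) (E t)) (I t) + ε * Real.exp (L * t) with hgdef
    set B : Set ℝ := Icc 0 T ∩ g ⁻¹' Iic 0 with hBdef
    have hgcont : ContinuousOn g (Icc 0 T) :=
      ((hScont.inf hEcont).inf hIcont).add (Continuous.continuousOn (continuous_const.mul (Real.continuous_exp.comp (continuous_const.mul continuous_id))))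
    have hBclosed : IsClosed B :=
      hgcont.preimage_isClosed_of_isClosed isClosed_Icc isClosed_Iic
    have hBne : B.Nonempty := by
      refine ⟨t1, ht1, ?_⟩
      simp only [mem_preimage, mem_Iic, hgdef]
      have hm1 : min (min (S t1) (E t1)) (I t1) ≤ S t1 :=
        le_trans (min_le_left _ _) (min_le_left _ _)
      have hm2 : min (min (S t1) (E t1)) (I t1) ≤ E t1 :=
        le_trans (min_le_left _ _) (min_le_right _ _)
      have hm3 : min (min (S t1) (E t1)) (I t1) ≤ I t1 := min_le_right _ _
      by_cases h1 : -(ε * Real.exp (L * t1)) < S t1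
      · by_cases h2 : -(ε * Real.exp (L * t1)) < E t1
        · have h3 := ht1' h1 h2
          linarith
        · push_neg at h2
          linarith
      · push_neg at h1
        linarith
    have hBbdd : BddBelow B := ⟨0, fun x hx => hx.1.1⟩
    set t0 : ℝ := sInf B with ht0def
    have ht0B : t0 ∈ B := hBclosed.csInf_mem hBne hBbdd
    have ht0Icc : t0 ∈ Icc (0:ℝ) T := ht0B.1
    have ht0pos : 0 < t0 := by
      rcases lt_or_eq_of_le ht0Icc.1 with h | h
      · exact h
      · exfalso
        have hB2 := ht0B.2
        simp only [mem_preimage, mem_Iic, hgdef, ← h, mul_zero, Real.exp_zero,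
          mul_one] at hB2
        have : 0 ≤ min (min (S 0) (E 0)) (I 0) := le_min (le_min hS0 hE0) hI0
        linarith
    -- before t0, everything is strictly above the barrier
    have hbefore : ∀ t ∈ Icc (0:ℝ) T, t < t0 → 0 < g t := by
      intro t ht htlt
      by_contra hle
      push_neg at hle
      have htB : t ∈ B := ⟨ht, by simpa [mem_preimage, mem_Iic] using hle⟩
      have := csInf_le hBbdd htB
      linarith
    have hcompbefore : ∀ t ∈ Icc (0:ℝ) T, t < t0 →
        -(ε * Real.exp (L * t)) < S t ∧ -(ε * Real.exp (L * t)) < E t ∧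
        -(ε * Real.exp (L * t)) < I t := by
      intro t ht htlt
      have hg := hbefore t ht htlt
      simp only [hgdef] at hg
      have h1 : min (min (S t) (E t)) (I t) ≤ S t :=
        le_trans (min_le_left _ _) (min_le_left _ _)
      have h2 : min (min (S t) (E t)) (I t) ≤ E t :=
        le_trans (min_le_left _ _) (min_le_right _ _)
      have h3 : min (min (S t) (E t)) (I t) ≤ I t := min_le_right _ _
      exact ⟨by linarith, by linarith, by linarith⟩
    set m : ℝ := ε * Real.exp (L * t0) with hmdef
    have hmpos : 0 < m := by positivity
    have hleftnbhd : Ioo (max 0 (t0 - 1)) t0 ∈ nhdsWithin t0 (Iio t0) :=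
      Ioo_mem_nhdsLT_of_mem ⟨max_lt ht0pos (by linarith), le_refl t0⟩
    have hIooIcc : ∀ t ∈ Ioo (max 0 (t0 - 1)) t0, t ∈ Icc (0:ℝ) T := by
      intro t ht
      exact ⟨le_of_lt (lt_of_le_of_lt (le_max_left 0 (t0-1)) ht.1),
        le_trans (le_of_lt ht.2) ht0Icc.2⟩
    have hbarcont : Continuous fun t : ℝ => ε * Real.exp (L * t) :=
      continuous_const.mul (Real.continuous_exp.comp (continuous_const.mul continuous_id))
    have hatleast : ∀ (c : ℝ → ℝ), ContinuousAt c t0 →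
        (∀ t ∈ Icc (0:ℝ) T, t < t0 → -(ε * Real.exp (L * t)) < c t) →
        -m ≤ c t0 := by
      intro c hc hlt
      have hcc : Tendsto (fun t => c t + ε * Real.exp (L * t)) (nhdsWithin t0 (Iio t0))
          (nhds (c t0 + ε * Real.exp (L * t0))) :=
        Tendsto.mono_left (hc.tendsto.add (hbarcont.tendsto t0)) nhdsWithin_le_nhds
      have hge : 0 ≤ c t0 + ε * Real.exp (L * t0) := by
        refine ge_of_tendsto hcc ?_
        filter_upwards [hleftnbhd] with t ht
        have := hlt t (hIooIcc t ht) ht.2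
        linarith
      simp only [hmdef]; linarith
    have hSge : -m ≤ S t0 := hatleast S (hS t0 ht0Icc).continuousAt
      (fun t ht h => (hcompbefore t ht h).1)
    have hEge : -m ≤ E t0 := hatleast E (hE t0 ht0Icc).continuousAt
      (fun t ht h => (hcompbefore t ht h).2.1)
    have hIge : -m ≤ I t0 := hatleast I (hI t0 ht0Icc).continuousAt
      (fun t ht h => (hcompbefore t ht h).2.2)
    have hgt0 : g t0 ≤ 0 := ht0B.2
    have hminle : min (min (S t0) (E t0)) (I t0) ≤ -m := by
      simp only [hgdef, hmdef] at hgt0 ⊢; linarith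
    have hexpderiv : HasDerivAt (fun t => ε * Real.exp (L * t))
        (ε * (L * Real.exp (L * t0))) t0 := by
      have h1 : HasDerivAt (fun t : ℝ => L * t) L t0 := by
        simpa using (hasDerivAt_id t0).const_mul L
      have h2 := ((Real.hasDerivAt_exp (L * t0)).comp t0 h1).const_mul ε
      refine h2.congr_deriv ?_
      ring
    have habs_S : |S t0| ≤ M := hMS' t0 ht0Icc
    have habs_I : |I t0| ≤ M := hMI' t0 ht0Icc
    have hSleM : S t0 ≤ M := le_of_abs_le habs_S
    have hIleM : I t0 ≤ M := le_of_abs_le habs_I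
    have hIgeM : -M ≤ I t0 := neg_le_of_abs_le habs_I
    -- generic contradiction machine
    have hmachine : ∀ (c : ℝ → ℝ) (d : ℝ), HasDerivAt c d t0 → c t0 = -m →
        (∀ t ∈ Icc (0:ℝ) T, t < t0 → -(ε * Real.exp (L * t)) < c t) →
        d + L * m ≤ 0 := by
      intro c d hd hct0 hlt
      have h := seir_aux_left_deriv_nonpos ht0pos (hd.add hexpderiv)
        (fun t ht1 ht2 => by
          have := hlt t (hIooIcc t ⟨ht1, ht2⟩) ht2
          show 0 < c t + ε * Real.exp (L * t)
          linarith)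
        (by simp only [Pi.add_apply, hct0, hmdef]; ring)
      have heq : ε * (L * Real.exp (L * t0)) = L * m := by simp only [hmdef]; ring
      linarith [h, heq.le, heq.ge]
    rcases le_total (min (S t0) (E t0)) (I t0) with hmin1 | hmin1
    · rw [min_eq_left hmin1] at hminle
      rcases le_total (S t0) (E t0) with hmin2 | hmin2
      · -- S hits the barrier
        rw [min_eq_left hmin2] at hminle
        have hSeq : S t0 = -m := le_antisymm hminle hSge
        have hd := hmachine S (-(β * S t0 * I t0) / P) (hS t0 ht0Icc) hSeq
          (fun t ht h => (hcompbefore t ht h).1)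
        rw [hSeq] at hd
        -- -(β*(-m)*I)/P + L*m ≤ 0
        have h3 : β * m * I t0 ≤ -(L * m) * P := by
          rw [← div_le_iff₀ hP]
          have : -(β * -m * I t0) / P = β * m * I t0 / P := by ring
          linarith [this.le, this.ge, hd]
        have hA : β * m * (-M) ≤ β * m * I t0 :=
          mul_le_mul_of_nonneg_left hIgeM (by positivity)
        have hLPm : L * P * m = σ * P * m + γ * P * m + β * M * m + P * m := by
          linear_combination m * hLP
        linarith [mul_pos (mul_pos hσ hP) hmpos, mul_pos (mul_pos hγ hP) hmpos,
          mul_pos hP hmpos]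
      · -- E hits the barrier
        rw [min_eq_right hmin2] at hminle
        have hEeq : E t0 = -m := le_antisymm hminle hEge
        have hd := hmachine E (β * S t0 * I t0 / P - σ * E t0) (hE t0 ht0Icc) hEeq
          (fun t ht h => (hcompbefore t ht h).2.1)
        rw [hEeq] at hd
        -- β*S*I/P + σ*m + L*m ≤ 0
        have h3 : β * (S t0 * I t0) ≤ (-(σ * m) - L * m) * P := by
          rw [← div_le_iff₀ hP]
          have h4 : β * S t0 * I t0 / P = β * (S t0 * I t0) / P := by ring
          linarith [h4.le, h4.ge, hd]
        have hSI : -(M * m) ≤ S t0 * I t0 := by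
          rcases le_or_gt 0 (I t0) with hc | hc
          · have h5 : -m * I t0 ≤ S t0 * I t0 := mul_le_mul_of_nonneg_right hSge hc
            have h6 : m * I t0 ≤ m * M := mul_le_mul_of_nonneg_left hIleM hmpos.le
            linarith
          · have h5 : M * I t0 ≤ S t0 * I t0 := mul_le_mul_of_nonpos_right hSleM hc.le
            have h6 : M * (-m) ≤ M * I t0 := mul_le_mul_of_nonneg_left hIge hM0
            linarith
        have hA : β * (-(M * m)) ≤ β * (S t0 * I t0) :=
          mul_le_mul_of_nonneg_left hSI hβ.le
        have hLPm : L * P * m = σ * P * m + γ * P * m + β * M * m + P * m := by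
          linear_combination m * hLP
        linarith [mul_pos (mul_pos hσ hP) hmpos, mul_pos (mul_pos hγ hP) hmpos,
          mul_pos hP hmpos]
    · -- I hits the barrier
      rw [min_eq_right hmin1] at hminle
      have hIeq : I t0 = -m := le_antisymm hminle hIge
      have hd := hmachine I (σ * E t0 - γ * I t0) (hI t0 ht0Icc) hIeq
        (fun t ht h => (hcompbefore t ht h).2.2)
      rw [hIeq] at hd
      have hA : σ * (-m) ≤ σ * E t0 := mul_le_mul_of_nonneg_left hEge hσ.le
      have hB' : σ * m ≤ L * m := mul_le_mul_of_nonneg_right hLσ hmpos.le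
      linarith [mul_pos hγ hmpos]
  -- nonnegativity of S, E, I on [0,T]
  have hnn : ∀ t ∈ Icc (0:ℝ) T, 0 ≤ S t ∧ 0 ≤ E t ∧ 0 ≤ I t := by
    intro t ht
    have hmain : ∀ c : ℝ, (∀ ε > (0:ℝ), -(ε * Real.exp (L * t)) < c) → 0 ≤ c := by
      intro c hc
      by_contra h
      push_neg at h
      have hε : 0 < -c / Real.exp (L * t) := div_pos (by linarith) (Real.exp_pos _)
      have := hc _ hε
      have heq : -(-c / Real.exp (L * t) * Real.exp (L * t)) = c := by
        field_simp
      linarith [heq.le, heq.ge]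
    exact ⟨hmain (S t) (fun ε hε => (key ε hε t ht).1),
      hmain (E t) (fun ε hε => (key ε hε t ht).2.1),
      hmain (I t) (fun ε hε => (key ε hε t ht).2.2)⟩
  have hSnn : ∀ t ∈ Icc (0:ℝ) T, 0 ≤ S t := fun t ht => (hnn t ht).1
  have hEnn : ∀ t ∈ Icc (0:ℝ) T, 0 ≤ E t := fun t ht => (hnn t ht).2.1
  have hInn : ∀ t ∈ Icc (0:ℝ) T, 0 ≤ I t := fun t ht => (hnn t ht).2.2
  -- R is monotone, hence nonnegative
  have hRmono : MonotoneOn R (Icc 0 T) := by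
    apply monotoneOn_of_deriv_nonneg (convex_Icc 0 T) hRcont
    · intro x hx
      rw [interior_Icc] at hx
      exact (hR x (Ioo_subset_Icc_self hx)).differentiableAt.differentiableWithinAt
    · intro x hx
      rw [interior_Icc] at hx
      have hx' := Ioo_subset_Icc_self hx
      rw [(hR x hx').deriv]
      exact mul_nonneg hγ.le (hInn x hx')
  -- total population is constant
  have hNconst : ∀ t ∈ Icc (0:ℝ) T, S t + E t + I t + R t = S 0 + E 0 + I 0 + R 0 := by
    have hcont : ContinuousOn (fun t => S t + E t + I t + R t) (Icc 0 T) :=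
      ((hScont.add hEcont).add hIcont).add hRcont
    have hderiv : ∀ x ∈ Ico (0:ℝ) T,
        HasDerivWithinAt (fun t => S t + E t + I t + R t) 0 (Ici x) x := by
      intro x hx
      have hx' : x ∈ Icc (0:ℝ) T := Ico_subset_Icc_self hx
      have h := (((hS x hx').add (hE x hx')).add (hI x hx')).add (hR x hx')
      have h' : HasDerivAt (fun t => S t + E t + I t + R t) 0 x := by
        refine h.congr_deriv ?_
        ring
      exact h'.hasDerivWithinAt
    exact constant_of_has_deriv_right_zero hcont hderiv
  -- hence I ≤ P
  have hIleP : ∀ t ∈ Icc (0:ℝ) T, I t ≤ P := by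
    intro t ht
    have hN := hNconst t ht
    have hRge : R 0 ≤ R t := hRmono h0mem ht ht.1
    have := hSnn t ht
    have := hEnn t ht
    linarith
  -- the function S t * exp(β t) is monotone
  have hgmono : MonotoneOn (fun t => S t * Real.exp (β * t)) (Icc 0 T) := by
    apply monotoneOn_of_deriv_nonneg (convex_Icc 0 T)
    · exact hScont.mul (Continuous.continuousOn (Real.continuous_exp.comp (continuous_const.mul continuous_id)))
    · intro x hx
      rw [interior_Icc] at hx
      have hx' := Ioo_subset_Icc_self hx
      have h1 : HasDerivAt (fun t : ℝ => Real.exp (β * t)) (β * Real.exp (β * x)) x := by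
        have h0 : HasDerivAt (fun t : ℝ => β * t) β x := by
          simpa using (hasDerivAt_id x).const_mul β
        have := (Real.hasDerivAt_exp (β * x)).comp x h0
        refine this.congr_deriv ?_
        ring
      exact ((hS x hx').mul h1).differentiableAt.differentiableWithinAt
    · intro x hx
      rw [interior_Icc] at hx
      have hx' := Ioo_subset_Icc_self hx
      have h1 : HasDerivAt (fun t : ℝ => Real.exp (β * t)) (β * Real.exp (β * x)) x := by
        have h0 : HasDerivAt (fun t : ℝ => β * t) β x := by
          simpa using (hasDerivAt_id x).const_mul β
        have := (Real.hasDerivAt_exp (β * x)).comp x h0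
        refine this.congr_deriv ?_
        ring
      have hd := (hS x hx').mul h1
      rw [show deriv (fun t => S t * Real.exp (β * t)) x = _ from hd.deriv]
      have hSx := hSnn x hx'
      have hIx := hIleP x hx'
      have hexp := (Real.exp_pos (β * x)).le
      have h2 : -(β * S x * I x) / P * Real.exp (β * x) + S x * (β * Real.exp (β * x))
          = β * S x * Real.exp (β * x) * (P - I x) / P := by
        field_simp
        ring
      rw [h2]
      apply div_nonneg _ hP.le
      apply mul_nonneg _ (by linarith)
      exact mul_nonneg (mul_nonneg hβ.le hSx) hexp
  -- conclusion
  intro t ht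
  refine ⟨mul_pos hS0pos (Real.exp_pos _), ?_⟩
  have h1 : S 0 * Real.exp (β * 0) ≤ S t * Real.exp (β * t) := hgmono h0mem ht ht.1
  rw [mul_zero, Real.exp_zero, mul_one] at h1
  calc S 0 * Real.exp (-(β * t))
      ≤ (S t * Real.exp (β * t)) * Real.exp (-(β * t)) :=
        mul_le_mul_of_nonneg_right h1 (Real.exp_pos _).le
    _ = S t := by
        rw [mul_assoc, ← Real.exp_add]
        simp
end
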